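/- Let F = (W, R, {S_w}) be an ILS-frame. The schema J5: ◇A▷A is valid in F if and only if for all x, y, z ∈ W, x R y and y R z imply y S_x {z}. -/
import Mathlib


/-- Formulas of the language L(□,▷) of interpretability logic. -/
inductive Fml : Type
  | bot : Fml
  | var : ℕ → Fml
  | imp : Fml → Fml → Fml
  | box : Fml → Fml
  | rhd : Fml → Fml → Fml
  deriving DecidableEq

namespace Fml
def neg (A : Fml) : Fml := A.imp bot
def top : Fml := Fml.bot.imp Fml.bot
def or (A B : Fml) : Fml := A.neg.imp B
def and (A B : Fml) : Fml := (A.imp B.neg).neg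
def dia (A : Fml) : Fml := (A.neg.box).neg
end Fml

/-- A formula is a propositional tautology if every Boolean valuation that treats
⊥ and → classically (and is otherwise arbitrary on atoms, boxed and ▷-formulas)
makes it true. -/
def Taut (A : Fml) : Prop :=
  ∀ v : Fml → Bool, v Fml.bot = false →
    (∀ B C : Fml, v (B.imp C) = (!(v B) || v C)) → v A = true

/-- Provability in IL⁻ extended by an additional set `Ax` of axioms.
Axioms: G1 (tautologies), G2, G3 (Löb), J3, J6 (both directions);
rules: modus ponens, necessitation, R1 and R2. -/
inductive ILMinus (Ax : Fml → Prop) : Fml → Prop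
  | ax {A : Fml} : Ax A → ILMinus Ax A
  | taut {A : Fml} : Taut A → ILMinus Ax A
  | G2 (A B : Fml) : ILMinus Ax (((A.imp B).box).imp ((A.box).imp (B.box)))
  | G3 (A : Fml) : ILMinus Ax ((((A.box).imp A).box).imp (A.box))
  | J3 (A B C : Fml) : ILMinus Ax (((A.rhd C).and (B.rhd C)).imp ((A.or B).rhd C))
  | J6a (A : Fml) : ILMinus Ax ((A.box).imp ((A.neg).rhd Fml.bot))
  | J6b (A : Fml) : ILMinus Ax (((A.neg).rhd Fml.bot).imp (A.box))
  | mp {A B : Fml} : ILMinus Ax (A.imp B) → ILMinus Ax A → ILMinus Ax B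
  | nec {A : Fml} : ILMinus Ax A → ILMinus Ax (A.box)
  | R1 {A B : Fml} (C : Fml) :
      ILMinus Ax (A.imp B) → ILMinus Ax ((C.rhd A).imp (C.rhd B))
  | R2 {A B : Fml} (C : Fml) :
      ILMinus Ax (A.imp B) → ILMinus Ax ((B.rhd C).imp (A.rhd C))

/-- The axiom schema J1 : □(A→B) → A▷B. -/
def J1Ax : Fml → Prop := fun F => ∃ A B : Fml, F = ((A.imp B).box).imp (A.rhd B)

/-- The axiom schema J2 : (A▷B)∧(B▷C) → A▷C. -/
def J2Ax : Fml → Prop := fun F => ∃ A B C : Fml, F = ((A.rhd B).and (B.rhd C)).imp (A.rhd C)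

/-- The axiom schema J2₊ : (A▷(B∨C))∧(B▷C) → A▷C. -/
def J2plusAx : Fml → Prop :=
  fun F => ∃ A B C : Fml, F = ((A.rhd (B.or C)).and (B.rhd C)).imp (A.rhd C)

/-- The axiom schema J5 : ◇A ▷ A. -/
def J5Ax : Fml → Prop := fun F => ∃ A : Fml, F = (A.dia).rhd A

/-- An ILS-frame (generalized Veltman frame): W nonempty, R transitive and
conversely well-founded, S_w ⊆ R[w] × (P(W) \ {∅}) monotone in the second
coordinate (here `S w x V` means x S_w V). -/
structure ILSFrame where
  W : Type
  R : W → W → Prop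
  S : W → W → Set W → Prop
  ne : Nonempty W
  trans : Transitive R
  cwf : WellFounded (fun x y => R y x)
  S_dom : ∀ w x V, S w x V → R w x ∧ V.Nonempty
  mono : ∀ w x (V U : Set W), S w x V → V ⊆ U → S w x U

/-- Satisfaction over the data of an ILS-frame. -/
def SatS {W : Type} (R : W → W → Prop) (S : W → W → Set W → Prop)
    (V : W → ℕ → Prop) : W → Fml → Prop
  | _, .bot => False
  | w, .var n => V w n
  | w, .imp A B => SatS R S V w A → SatS R S V w B
  | w, .box A => ∀ x, R w x → SatS R S V x A
  | w, .rhd A B => ∀ x, R w x → SatS R S V x A →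
      ∃ U : Set W, S w x U ∧ ∀ y ∈ U, SatS R S V y B

/-- Validity in an ILS-frame. -/
def ValidS (F : ILSFrame) (A : Fml) : Prop :=
  ∀ (V : F.W → ℕ → Prop) (w : F.W), SatS F.R F.S V w A

/-- J5 : ◇A ▷ A is valid in an ILS-frame iff x R y and y R z imply y S_x {z}. -/
theorem J5_valid_iff_ILS (F : ILSFrame) :
    (∀ A : Fml, ValidS F ((A.dia).rhd A)) ↔
      ∀ x y z : F.W, F.R x y → F.R y z → F.S x y {z} := by
  constructor
  · intro h x y z hxy hyz
    have hv := h (Fml.var 0) (fun w _ => w = z) x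
    simp only [Fml.dia, Fml.neg, SatS] at hv
    have hdia : (∀ u, F.R y u → ((u = z) → False)) → False := fun hall => hall z hyz rfl
    obtain ⟨U, hS, hU⟩ := hv y hxy hdia
    exact F.mono x y U {z} hS (fun u hu => hU u hu)
  · intro h A V w
    simp only [Fml.dia, Fml.neg, SatS]
    intro x hwx hdia
    by_contra hc
    apply hdia
    intro u hxu hu
    exact hc ⟨{u}, h w x u hwx hxu, fun y hy => by rwa [Set.mem_singleton_iff.mp hy]⟩
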